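/- Let α ∈ (0,1), θ > -α, and (V_j) the size-biased pick from PD(α,θ), with Σ_n = Σ_{j=1}^n V_j^α. Then sup_n E[(Σ_n/log n)^2] < ∞; in fact E[Σ_n^2] ≤ C (log n)^2 for a constant C depending only on α, θ and all n ≥ 2. -/

import Mathlib

open MeasureTheory ProbabilityTheory Filter Topology

/-- The Beta(a,b) distribution on `ℝ`, supported on `(0,1)`, with density
`Γ(a+b)/(Γ(a)Γ(b)) x^{a-1}(1-x)^{b-1}`. -/
noncomputable def betaMeasure (a b : ℝ) : Measure ℝ :=
  (MeasureTheory.volume.restrict (Set.Ioo (0:ℝ) 1)).withDensity fun x =>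
    ENNReal.ofReal (Real.Gamma (a + b) / (Real.Gamma a * Real.Gamma b) *
      x ^ (a - 1) * (1 - x) ^ (b - 1))

/-- `(Y j)_{j ≥ 1}` are independent with `Y j ∼ Beta(1-α, θ+jα)` (the stick-breaking
variables of the `PD(α,θ)` distribution). -/
def IsStickBreaking {Ω : Type*} [MeasureSpace Ω] (α θ : ℝ) (Y : ℕ → Ω → ℝ) : Prop :=
  (∀ j, Measurable (Y j)) ∧
    iIndepFun Y ℙ ∧
      ∀ j : ℕ, 1 ≤ j → Measure.map (Y j) ℙ = _root_.betaMeasure (1 - α) (θ + j * α)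

/-- `M n = ∏_{i=1}^n (1 - Y i)` (so `M 0 = 1`). -/
noncomputable def Mstick {Ω : Type*} (Y : ℕ → Ω → ℝ) (n : ℕ) (ω : Ω) : ℝ :=
  ∏ i ∈ Finset.Icc 1 n, (1 - Y i ω)

/-- `V j = Y j ∏_{i<j} (1 - Y i)`, the size-biased pick from `PD(α,θ)` (for `j ≥ 1`). -/
noncomputable def Vpick {Ω : Type*} (Y : ℕ → Ω → ℝ) (j : ℕ) (ω : Ω) : ℝ :=
  Y j ω * ∏ i ∈ Finset.Icc 1 (j - 1), (1 - Y i ω)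

/-- `Σ_n = Σ_{j=1}^n V_j^α`. -/
noncomputable def SigmaSum {Ω : Type*} (α : ℝ) (Y : ℕ → Ω → ℝ) (n : ℕ) (ω : Ω) : ℝ :=
  ∑ j ∈ Finset.Icc 1 n, Vpick Y j ω ^ α

/-!
Rather than computing the mixed moments `E[V_i^α V_j^α]`, apply the weighted Cauchy–Schwarz
inequality `Σ_n² ≤ (∑ⱼ 1/aⱼ) ∑ⱼ aⱼ V_j^{2α}` with `aⱼ = θ + jα`, which leaves only the diagonal
moments. By independence `E[V_j^{2α}] = E[Y_j^{2α}] ∏_{i<j} E[(1-Y_i)^{2α}]`; written with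
`g(x) = Γ(x)/Γ(x+1-α)` each Beta factor is `g(aᵢ + 2α)/g(aᵢ)`, the product telescopes, and
`E[V_j^{2α}] = c/(aⱼ aⱼ₊₁)` exactly. Hence `E[Σ_n²] ≤ c (∑_{j≤n} 1/aⱼ)²`, which is
`O((log n)²)` because `aⱼ ≥ j · min(α, θ+α)`.
-/

lemma integral_Ioo_rpow_mul_one_sub_rpow {u v : ℝ} (hu : 0 < u) (hv : 0 < v) :
    ∫ x in Set.Ioo (0:ℝ) 1, x ^ (u - 1) * (1 - x) ^ (v - 1) =
      Real.Gamma u * Real.Gamma v / Real.Gamma (u + v) := by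
  have hB := Complex.Gamma_mul_Gamma_eq_betaIntegral (s := u) (t := v)
    (by simpa using hu) (by simpa using hv)
  have hB_real : Complex.betaIntegral u v =
      ((∫ x in Set.Ioo (0:ℝ) 1, x ^ (u - 1) * (1 - x) ^ (v - 1) : ℝ) : ℂ) := by
    rw [Complex.betaIntegral, intervalIntegral.integral_of_le zero_le_one,
      integral_Ioc_eq_integral_Ioo]
    refine (setIntegral_congr_fun measurableSet_Ioo fun x ⟨hx0, hx1⟩ => ?_).trans integral_ofReal
    rw [RCLike.ofReal_eq_complex_ofReal, Complex.ofReal_mul, Complex.ofReal_cpow hx0.le,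
      Complex.ofReal_cpow (by linarith)]
    push_cast
    ring
  rw [hB_real, ← Complex.ofReal_add, Complex.Gamma_ofReal, Complex.Gamma_ofReal,
    Complex.Gamma_ofReal, ← Complex.ofReal_mul, ← Complex.ofReal_mul] at hB
  rw [Complex.ofReal_inj.mp hB]
  field_simp [(Real.Gamma_pos_of_pos (add_pos hu hv)).ne']

lemma ae_mem_Ioo_betaMeasure (a b : ℝ) : ∀ᵐ x ∂(_root_.betaMeasure a b), x ∈ Set.Ioo (0:ℝ) 1 := by
  rw [ae_iff, ← Set.compl_def, _root_.betaMeasure, withDensity_apply _ measurableSet_Ioo.compl,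
    Measure.restrict_restrict measurableSet_Ioo.compl]
  simp

lemma integral_rpow_mul_one_sub_rpow_betaMeasure {a b s t : ℝ} (ha : 0 < a) (hb : 0 < b)
    (has : 0 < a + s) (hbt : 0 < b + t) :
    ∫ x, x ^ s * (1 - x) ^ t ∂(_root_.betaMeasure a b) =
      Real.Gamma (a + b) / (Real.Gamma a * Real.Gamma b) *
        (Real.Gamma (a + s) * Real.Gamma (b + t) / Real.Gamma (a + s + (b + t))) := by
  set c := Real.Gamma (a + b) / (Real.Gamma a * Real.Gamma b)
  have hc : 0 ≤ c := by
    have := Real.Gamma_pos_of_pos ha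
    have := Real.Gamma_pos_of_pos hb
    have := Real.Gamma_pos_of_pos (add_pos ha hb)
    positivity
  rw [_root_.betaMeasure, integral_withDensity_eq_integral_toReal_smul (by fun_prop)
    (ae_of_all _ fun _ => ENNReal.ofReal_lt_top), ← integral_Ioo_rpow_mul_one_sub_rpow has hbt,
    ← integral_const_mul]
  refine setIntegral_congr_fun measurableSet_Ioo fun x ⟨hx0, hx1⟩ => ?_
  have h1x : 0 < 1 - x := by linarith
  rw [ENNReal.toReal_ofReal (by positivity), smul_eq_mul, add_sub_right_comm a s,
    add_sub_right_comm b t, Real.rpow_add hx0, Real.rpow_add h1x]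
  ring

lemma integral_rpow_betaMeasure {a b s : ℝ} (ha : 0 < a) (hb : 0 < b) (has : 0 < a + s) :
    ∫ x, x ^ s ∂(_root_.betaMeasure a b) =
      Real.Gamma (a + b) / Real.Gamma (a + b + s) * (Real.Gamma (a + s) / Real.Gamma a) := by
  have h := integral_rpow_mul_one_sub_rpow_betaMeasure ha hb has (t := 0) (by simpa using hb)
  simp only [Real.rpow_zero, mul_one, add_zero] at h
  rw [h, add_right_comm a s b]
  field_simp [(Real.Gamma_pos_of_pos hb).ne']

lemma integral_one_sub_rpow_betaMeasure {a b t : ℝ} (ha : 0 < a) (hb : 0 < b) (hbt : 0 < b + t) :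
    ∫ x, (1 - x) ^ t ∂(_root_.betaMeasure a b) =
      Real.Gamma (a + b) / Real.Gamma (a + b + t) * (Real.Gamma (b + t) / Real.Gamma b) := by
  have h := integral_rpow_mul_one_sub_rpow_betaMeasure ha hb (s := 0) (by simpa using ha) hbt
  simp only [Real.rpow_zero, one_mul, add_zero] at h
  rw [h, ← add_assoc]
  field_simp [(Real.Gamma_pos_of_pos ha).ne']

noncomputable def gammaRatio (α x : ℝ) : ℝ := Real.Gamma x / Real.Gamma (x + 1 - α)

lemma gammaRatio_pos {α x : ℝ} (hα : α < 1) (hx : 0 < x) : 0 < gammaRatio α x :=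
  div_pos (Real.Gamma_pos_of_pos hx) (Real.Gamma_pos_of_pos (by linarith))

lemma gamma_div_gamma_mul_gammaRatio_mul_gammaRatio {α b : ℝ} (hα : α ∈ Set.Ioo (0:ℝ) 1)
    (hb : 0 < b) :
    Real.Gamma (b + 1 - α) / Real.Gamma (b + 1 + α) *
        (gammaRatio α b * gammaRatio α (b + α)) = 1 / (b * (b + α)) := by
  have hbα : 0 < b + α := by linarith [hα.1]
  rw [gammaRatio, gammaRatio, show b + α + 1 - α = b + 1 by ring,
    show b + 1 + α = b + α + 1 by ring, Real.Gamma_add_one hb.ne',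
    Real.Gamma_add_one hbα.ne']
  have := Real.Gamma_pos_of_pos hb
  have := Real.Gamma_pos_of_pos hbα
  have := Real.Gamma_pos_of_pos (show 0 < b + 1 - α by linarith [hα.2])
  field_simp

lemma ProbabilityTheory.iIndepFun.integral_finset_prod_comp {Ω ι β : Type*}
    [MeasurableSpace Ω] {μ : Measure Ω} [MeasurableSpace β] {Y : ι → Ω → β}
    (hY : iIndepFun Y μ) (hmeas : ∀ i, Measurable (Y i)) (s : Finset ι) {F : ι → β → ℝ}
    (hF : ∀ i, Measurable (F i)) :
    ∫ ω, ∏ i ∈ s, F i (Y i ω) ∂μ = ∏ i ∈ s, ∫ ω, F i (Y i ω) ∂μ := by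
  have h := (hY.precomp Subtype.val_injective (g := ((↑) : s → ι))).integral_fun_prod_comp
    (f := fun i : s => F i) (fun i => (hmeas i).aemeasurable)
    (fun i => (hF i).aestronglyMeasurable)
  rwa [Finset.prod_coe_sort s (fun i => ∫ ω, F i (Y i ω) ∂μ),
    funext fun ω => Finset.prod_coe_sort s (fun i => F i (Y i ω))] at h

lemma Finset.prod_Icc_succ_top_ite {M : Type*} [CommMonoid M] (n : ℕ) (f g : ℕ → M) :
    ∏ k ∈ Finset.Icc 1 (n + 1), (if k = n + 1 then f k else g k) =
      f (n + 1) * ∏ k ∈ Finset.Icc 1 n, g k := by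
  rw [Finset.prod_Icc_succ_top (by omega), if_pos rfl, mul_comm]
  congr 1
  refine Finset.prod_congr rfl fun k hk => if_neg ?_
  simp only [Finset.mem_Icc] at hk
  omega

lemma Vpick_succ_rpow_sq {Ω : Type*} (Y : ℕ → Ω → ℝ) (α : ℝ) (n : ℕ) (ω : Ω)
    (h0 : 0 ≤ Y (n + 1) ω) (h1 : ∀ k ∈ Finset.Icc 1 n, Y k ω ≤ 1) :
    (Vpick Y (n + 1) ω ^ α) ^ 2 =
      Y (n + 1) ω ^ (2 * α) * ∏ k ∈ Finset.Icc 1 n, (1 - Y k ω) ^ (2 * α) := by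
  have hprod : ∀ k ∈ Finset.Icc 1 n, 0 ≤ 1 - Y k ω := fun k hk => sub_nonneg.mpr (h1 k hk)
  rw [Vpick, Nat.add_sub_cancel, ← Real.rpow_natCast, ← Real.rpow_mul
    (mul_nonneg h0 (Finset.prod_nonneg hprod)), Real.mul_rpow h0 (Finset.prod_nonneg hprod),
    ← Real.finsetProd_rpow _ _ hprod, Nat.cast_ofNat, mul_comm α 2]

noncomputable def sqMomentConst (α θ : ℝ) : ℝ :=
  Real.Gamma (1 + α) / (Real.Gamma (1 - α) * (gammaRatio α (θ + α) * gammaRatio α (θ + α + α)))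

lemma sqMomentConst_pos {α θ : ℝ} (hα : α ∈ Set.Ioo (0:ℝ) 1) (hθ : -α < θ) :
    0 < sqMomentConst α θ := by
  have := Real.Gamma_pos_of_pos (show 0 < 1 + α by linarith [hα.1])
  have := Real.Gamma_pos_of_pos (show 0 < 1 - α by linarith [hα.2])
  have := gammaRatio_pos hα.2 (show 0 < θ + α by linarith)
  have := gammaRatio_pos hα.2 (show 0 < θ + α + α by linarith [hα.1])
  rw [sqMomentConst]
  positivity

lemma stick_param_pos {α θ : ℝ} (hα : 0 < α) (hθ : -α < θ) {k : ℕ} (hk : 1 ≤ k) :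
    0 < θ + k * α := by
  have : (1:ℝ) ≤ k := by exact_mod_cast hk
  nlinarith

namespace IsStickBreaking

variable {Ω : Type*} [MeasureSpace Ω] {α θ : ℝ} {Y : ℕ → Ω → ℝ}

lemma ae_mem_Ioo (hY : IsStickBreaking α θ Y) :
    ∀ᵐ ω ∂(ℙ : Measure Ω), ∀ k, 1 ≤ k → Y k ω ∈ Set.Ioo (0:ℝ) 1 := by
  rw [ae_all_iff]
  intro k
  by_cases hk : 1 ≤ k
  · have h := ae_mem_Ioo_betaMeasure (1 - α) (θ + k * α)
    rw [← hY.2.2 k hk] at h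
    filter_upwards [(ae_map_iff (hY.1 k).aemeasurable measurableSet_Ioo).mp h] with ω hω
      using fun _ => hω
  · exact ae_of_all _ fun ω hk' => absurd hk' hk

lemma integral_comp (hY : IsStickBreaking α θ Y) {k : ℕ} (hk : 1 ≤ k) {f : ℝ → ℝ}
    (hf : Measurable f) :
    ∫ ω, f (Y k ω) = ∫ x, f x ∂(_root_.betaMeasure (1 - α) (θ + k * α)) := by
  rw [← hY.2.2 k hk, integral_map (hY.1 k).aemeasurable hf.aestronglyMeasurable]

variable (hα : α ∈ Set.Ioo (0:ℝ) 1) (hθ : -α < θ)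
include hα hθ

lemma integral_rpow (hY : IsStickBreaking α θ Y) {k : ℕ} (hk : 1 ≤ k) :
    ∫ ω, Y k ω ^ (2 * α) = Real.Gamma (1 + α) / Real.Gamma (1 - α) *
      (Real.Gamma (θ + k * α + 1 - α) / Real.Gamma (θ + k * α + 1 + α)) := by
  have hb := stick_param_pos hα.1 hθ hk
  rw [hY.integral_comp hk (f := fun x => x ^ (2 * α)) (by fun_prop),
    integral_rpow_betaMeasure (by linarith [hα.2]) hb (by linarith [hα.1]),
    show 1 - α + 2 * α = 1 + α by ring, show 1 - α + (θ + k * α) = θ + k * α + 1 - α by ring,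
    show θ + k * α + 1 - α + 2 * α = θ + k * α + 1 + α by ring]
  ring

lemma integral_one_sub_rpow (hY : IsStickBreaking α θ Y) {k : ℕ} (hk : 1 ≤ k) :
    ∫ ω, (1 - Y k ω) ^ (2 * α) =
      gammaRatio α (θ + k * α + 2 * α) / gammaRatio α (θ + k * α) := by
  have hb := stick_param_pos hα.1 hθ hk
  rw [hY.integral_comp hk (f := fun x => (1 - x) ^ (2 * α)) (by fun_prop),
    integral_one_sub_rpow_betaMeasure (by linarith [hα.2]) hb (by linarith [hα.1]),
    gammaRatio, gammaRatio, show 1 - α + (θ + k * α) = θ + k * α + 1 - α by ring,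
    show θ + k * α + 1 - α + 2 * α = θ + k * α + 2 * α + 1 - α by ring]
  have := Real.Gamma_pos_of_pos hb
  have := Real.Gamma_pos_of_pos (show 0 < θ + k * α + 1 - α by linarith [hα.2])
  field_simp

lemma prod_integral_one_sub_rpow (hY : IsStickBreaking α θ Y) (n : ℕ) :
    ∏ k ∈ Finset.Icc 1 n, ∫ ω, (1 - Y k ω) ^ (2 * α) =
      gammaRatio α (θ + (n + 1) * α) * gammaRatio α (θ + (n + 1) * α + α) /
        (gammaRatio α (θ + α) * gammaRatio α (θ + α + α)) := by
  induction n with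
  | zero =>
    have h1 := gammaRatio_pos hα.2 (show 0 < θ + α by linarith [hα.1])
    have h2 := gammaRatio_pos hα.2 (show 0 < θ + α + α by linarith [hα.1])
    simp only [Finset.Icc_eq_empty_of_lt zero_lt_one, Finset.prod_empty, Nat.cast_zero, zero_add,
      one_mul]
    exact (div_self (mul_pos h1 h2).ne').symm
  | succ n ih =>
    have := gammaRatio_pos hα.2 (stick_param_pos hα.1 hθ (k := n + 1) (by omega))
    rw [Finset.prod_Icc_succ_top (by omega), ih, hY.integral_one_sub_rpow hα hθ (by omega)]
    push_cast at this ⊢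
    rw [show θ + (n + 1 + 1) * α = θ + (n + 1) * α + α by ring,
      show θ + (n + 1) * α + α + α = θ + (n + 1) * α + 2 * α by ring]
    field_simp

lemma integral_Vpick_rpow_sq (hY : IsStickBreaking α θ Y) {j : ℕ} (hj : 1 ≤ j) :
    ∫ ω, (Vpick Y j ω ^ α) ^ 2 = sqMomentConst α θ / ((θ + j * α) * (θ + j * α + α)) := by
  obtain ⟨n, rfl⟩ : ∃ n, j = n + 1 := ⟨j - 1, by omega⟩
  set F : ℕ → ℝ → ℝ := fun k x => if k = n + 1 then x ^ (2 * α) else (1 - x) ^ (2 * α)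
  have hF : ∀ k, Measurable (F k) := fun k => by
    by_cases hk : k = n + 1 <;> simp only [F, hk, if_true, if_false] <;> fun_prop
  have hint : ∀ k, ∫ ω, F k (Y k ω) =
      if k = n + 1 then ∫ ω, Y k ω ^ (2 * α) else ∫ ω, (1 - Y k ω) ^ (2 * α) := fun k => by
    by_cases hk : k = n + 1 <;> simp only [F, hk, if_true, if_false]
  calc ∫ ω, (Vpick Y (n + 1) ω ^ α) ^ 2
      = ∫ ω, ∏ k ∈ Finset.Icc 1 (n + 1), F k (Y k ω) := by
        refine integral_congr_ae ?_
        filter_upwards [hY.ae_mem_Ioo] with ω hω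
        rw [Vpick_succ_rpow_sq Y α n ω (hω (n + 1) (by omega)).1.le
          fun k hk => (hω k (Finset.mem_Icc.mp hk).1).2.le]
        simp only [F, Finset.prod_Icc_succ_top_ite]
    _ = ∏ k ∈ Finset.Icc 1 (n + 1), ∫ ω, F k (Y k ω) :=
        hY.2.1.integral_finset_prod_comp hY.1 _ hF
    _ = (∫ ω, Y (n + 1) ω ^ (2 * α)) * ∏ k ∈ Finset.Icc 1 n, ∫ ω, (1 - Y k ω) ^ (2 * α) := by
        simp only [hint, Finset.prod_Icc_succ_top_ite]
    _ = sqMomentConst α θ / ((θ + (n + 1 : ℕ) * α) * (θ + (n + 1 : ℕ) * α + α)) := by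
        have hb := stick_param_pos hα.1 hθ (k := n + 1) (by omega)
        push_cast at hb ⊢
        rw [hY.integral_rpow hα hθ (by omega), hY.prod_integral_one_sub_rpow hα hθ,
          div_eq_mul_one_div (sqMomentConst α θ),
          ← gamma_div_gamma_mul_gammaRatio_mul_gammaRatio hα hb, sqMomentConst]
        push_cast
        have := Real.Gamma_pos_of_pos (show 0 < 1 - α by linarith [hα.2])
        have := gammaRatio_pos hα.2 (show 0 < θ + α by linarith [hα.1])
        have := gammaRatio_pos hα.2 (show 0 < θ + α + α by linarith [hα.1])
        field_simp

lemma integral_sq_SigmaSum_le (hY : IsStickBreaking α θ Y) (n : ℕ) :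
    ∫ ω, SigmaSum α Y n ω ^ 2 ≤
      sqMomentConst α θ * (∑ j ∈ Finset.Icc 1 n, 1 / (θ + j * α)) ^ 2 := by
  set S := ∑ j ∈ Finset.Icc 1 n, 1 / (θ + j * α)
  have hw : ∀ j ∈ Finset.Icc 1 n, 0 < θ + j * α := fun j hj =>
    stick_param_pos hα.1 hθ (Finset.mem_Icc.mp hj).1
  have hD := sqMomentConst_pos hα hθ
  have hint : ∀ j ∈ Finset.Icc 1 n, Integrable (fun ω => (Vpick Y j ω ^ α) ^ 2) := fun j hj => by
    refine Integrable.of_integral_ne_zero ?_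
    rw [hY.integral_Vpick_rpow_sq hα hθ (Finset.mem_Icc.mp hj).1]
    have := hw j hj
    have : 0 < θ + j * α + α := by linarith [hα.1]
    positivity
  have hCS : ∀ ω, SigmaSum α Y n ω ^ 2 ≤
      S * ∑ j ∈ Finset.Icc 1 n, (θ + j * α) * (Vpick Y j ω ^ α) ^ 2 := fun ω =>
    Finset.sum_sq_le_sum_mul_sum_of_sq_le_mul _ (fun j hj => (one_div_pos.mpr (hw j hj)).le)
      (fun j hj => mul_nonneg (hw j hj).le (sq_nonneg _))
      fun j hj => by rw [← mul_assoc, one_div_mul_cancel (hw j hj).ne', one_mul]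
  calc ∫ ω, SigmaSum α Y n ω ^ 2
      ≤ ∫ ω, S * ∑ j ∈ Finset.Icc 1 n, (θ + j * α) * (Vpick Y j ω ^ α) ^ 2 :=
        integral_mono_of_nonneg (ae_of_all _ fun ω => sq_nonneg _)
          ((integrable_finsetSum _ fun j hj => (hint j hj).const_mul _).const_mul _)
          (ae_of_all _ hCS)
    _ = S * ∑ j ∈ Finset.Icc 1 n, sqMomentConst α θ / (θ + j * α + α) := by
        rw [integral_const_mul, integral_finsetSum _ fun j hj => (hint j hj).const_mul _]
        congr 1
        refine Finset.sum_congr rfl fun j hj => ?_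
        rw [integral_const_mul, hY.integral_Vpick_rpow_sq hα hθ (Finset.mem_Icc.mp hj).1]
        have := hw j hj
        field_simp
    _ ≤ S * ∑ j ∈ Finset.Icc 1 n, sqMomentConst α θ * (1 / (θ + j * α)) := by
        gcongr with j hj
        · exact Finset.sum_nonneg fun j hj => (one_div_pos.mpr (hw j hj)).le
        · rw [mul_one_div]
          exact div_le_div_of_nonneg_left hD.le (hw j hj) (by linarith [hα.1])
    _ = sqMomentConst α θ * S ^ 2 := by rw [← Finset.mul_sum]; ring

end IsStickBreaking

lemma sum_one_div_stick_param_le {α θ : ℝ} (hα : 0 < α) (hθ : -α < θ) {n : ℕ} (hn : 2 ≤ n) :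
    ∑ j ∈ Finset.Icc 1 n, 1 / (θ + j * α) ≤ 3 / min α (θ + α) * Real.log n := by
  set m := min α (θ + α)
  have hm : 0 < m := lt_min hα (by linarith)
  have hterm : ∀ j ∈ Finset.Icc 1 n, 1 / (θ + j * α) ≤ m⁻¹ * (j : ℝ)⁻¹ := fun j hj => by
    have hj : (1:ℝ) ≤ j := by exact_mod_cast (Finset.mem_Icc.mp hj).1
    have hmj : m * j ≤ θ + j * α := by
      nlinarith [min_le_left α (θ + α), min_le_right α (θ + α)]
    rw [one_div, ← mul_inv]
    exact inv_anti₀ (by positivity) hmj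
  have hlog : 1 / 2 < Real.log n := by
    have : Real.log 2 ≤ Real.log n := Real.log_le_log two_pos (by exact_mod_cast hn)
    linarith [Real.log_two_gt_d9]
  calc ∑ j ∈ Finset.Icc 1 n, 1 / (θ + j * α)
      ≤ m⁻¹ * harmonic n := by
        rw [harmonic_eq_sum_Icc]
        push_cast
        rw [Finset.mul_sum]
        exact Finset.sum_le_sum hterm
    _ ≤ m⁻¹ * (1 + Real.log n) := by gcongr; exact harmonic_le_one_add_log n
    _ ≤ m⁻¹ * (3 * Real.log n) := by gcongr; linarith
    _ = 3 / m * Real.log n := by ring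

theorem stmt11_general {Ω : Type*} [MeasureSpace Ω]
    (α θ : ℝ) (hα : α ∈ Set.Ioo (0:ℝ) 1) (hθ : -α < θ)
    (Y : ℕ → Ω → ℝ) (hY : IsStickBreaking α θ Y) :
    (∃ B : ℝ, ∀ n : ℕ, ∫ ω, (SigmaSum α Y n ω / Real.log n) ^ 2 ∂ℙ ≤ B) ∧
      ∃ C : ℝ, ∀ n : ℕ, 2 ≤ n →
        ∫ ω, SigmaSum α Y n ω ^ 2 ∂ℙ ≤ C * Real.log n ^ 2 := by
  set C := sqMomentConst α θ * (3 / min α (θ + α)) ^ 2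
  have hC : 0 ≤ C := mul_nonneg (sqMomentConst_pos hα hθ).le (sq_nonneg _)
  have hbound : ∀ n : ℕ, 2 ≤ n → ∫ ω, SigmaSum α Y n ω ^ 2 ≤ C * Real.log n ^ 2 := fun n hn => by
    refine (hY.integral_sq_SigmaSum_le hα hθ n).trans ?_
    rw [mul_assoc, ← mul_pow]
    gcongr
    · exact (sqMomentConst_pos hα hθ).le
    · exact Finset.sum_nonneg fun j hj =>
        (one_div_pos.mpr (stick_param_pos hα.1 hθ (Finset.mem_Icc.mp hj).1)).le
    · exact sum_one_div_stick_param_le hα.1 hθ hn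
  refine ⟨⟨C, fun n => ?_⟩, C, hbound⟩
  rcases lt_or_ge n 2 with hn | hn
  · have : Real.log n = 0 := by interval_cases n <;> simp
    simpa [this] using hC
  · have hlog : 0 < Real.log n := Real.log_pos (by exact_mod_cast hn)
    simp_rw [div_pow]
    rw [integral_div, div_le_iff₀ (by positivity)]
    exact hbound n hn

/-- `sup_n E[(Σ_n/log n)^2] < ∞`, and in fact `E[Σ_n^2] ≤ C (log n)^2`
for some constant `C` (depending only on `α, θ`) and all `n ≥ 2`. -/
theorem stmt11 {Ω : Type*} [MeasureSpace Ω] [IsProbabilityMeasure (ℙ : Measure Ω)]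
    (α θ : ℝ) (hα : α ∈ Set.Ioo (0:ℝ) 1) (hθ : -α < θ)
    (Y : ℕ → Ω → ℝ) (hY : IsStickBreaking α θ Y) :
    (∃ B : ℝ, ∀ n : ℕ, ∫ ω, (SigmaSum α Y n ω / Real.log n) ^ 2 ∂ℙ ≤ B) ∧
      ∃ C : ℝ, ∀ n : ℕ, 2 ≤ n →
        ∫ ω, SigmaSum α Y n ω ^ 2 ∂ℙ ≤ C * Real.log n ^ 2 :=
  stmt11_general α θ hα hθ Y hY
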